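/- arXiv:2405.18163 — 2 statements merged into one kernel-verified Lean document; each statement's English description precedes it below -/
import Mathlib

section
/- Let m₀, m₁ ∈ ℝⁿ and let Σ₀, Σ₁ be symmetric positive definite n×n real matrices such that Σ₀ - Σ₁ is positive semidefinite. Then a vector w ∈ ℝⁿ is a global minimizer of the ratio x ↦ f_{m₀,Σ₀}(x)/f_{m₁,Σ₁}(x), i.e. f_{m₀,Σ₀}(w)/f_{m₁,Σ₁}(w) ≤ f_{m₀,Σ₀}(x)/f_{m₁,Σ₁}(x) for all x ∈ ℝⁿ, if and only if Σ₁⁻¹(w - m₁) = Σ₀⁻¹(w - m₀). -/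
/-!
Write `Qᵢ x = (x - mᵢ) ⬝ᵥ Sᵢ⁻¹ (x - mᵢ)`. The ratio of the densities is a positive constant times
`exp (-(Q₀ - Q₁) / 2)`, so `w` minimizes it iff `w` maximizes `D = Q₀ - Q₁`. Expanding at `w`,
`D (w + v) = D w + 2 v ⬝ᵥ g - v ⬝ᵥ (S₁⁻¹ - S₀⁻¹) v` with `g = S₀⁻¹ (w - m₀) - S₁⁻¹ (w - m₁)`.
Since `S₁ ≤ S₀` forces `S₀⁻¹ ≤ S₁⁻¹`, the quadratic part is nonpositive, and such a concave
quadratic has its maximum at `v = 0` iff its linear part `g` vanishes.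
-/

open Matrix MeasureTheory

/-- The multivariate Gaussian probability density function with mean `m` and
covariance matrix `S` on `ℝⁿ`. -/
noncomputable def gaussianPDF {n : ℕ} (m : Fin n → ℝ) (S : Matrix (Fin n) (Fin n) ℝ)
    (x : Fin n → ℝ) : ℝ :=
  (2 * Real.pi) ^ (-(n : ℝ) / 2) * S.det ^ (-(1 : ℝ) / 2) *
    Real.exp (-(1 / 2) * ((x - m) ⬝ᵥ (S⁻¹ *ᵥ (x - m))))

namespace Matrix

variable {ι : Type*} [Fintype ι]

lemma IsSymm.dotProduct_mulVec_comm {R : Type*} [CommSemiring R] {A : Matrix ι ι R}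
    (hA : A.IsSymm) (u v : ι → R) : u ⬝ᵥ (A *ᵥ v) = v ⬝ᵥ (A *ᵥ u) := by
  rw [dotProduct_mulVec, ← mulVec_transpose, hA.eq, dotProduct_comm]

lemma IsSymm.add_dotProduct_mulVec_add {R : Type*} [CommRing R] {A : Matrix ι ι R}
    (hA : A.IsSymm) (u v : ι → R) :
    (u + v) ⬝ᵥ (A *ᵥ (u + v)) = u ⬝ᵥ (A *ᵥ u) + 2 * (u ⬝ᵥ (A *ᵥ v)) + v ⬝ᵥ (A *ᵥ v) := by
  rw [mulVec_add, add_dotProduct, dotProduct_add, dotProduct_add, hA.dotProduct_mulVec_comm v u]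
  ring

lemma IsSymm.dotProduct_mulVec_sub_add {R : Type*} [CommRing R] {A : Matrix ι ι R}
    (hA : A.IsSymm) (w m v : ι → R) :
    (w + v - m) ⬝ᵥ (A *ᵥ (w + v - m)) =
      (w - m) ⬝ᵥ (A *ᵥ (w - m)) + 2 * (v ⬝ᵥ (A *ᵥ (w - m))) + v ⬝ᵥ (A *ᵥ v) := by
  rw [show w + v - m = v + (w - m) by abel, hA.add_dotProduct_mulVec_add]
  ring

lemma forall_two_mul_dotProduct_add_le_zero_iff {A : Matrix ι ι ℝ}
    (hA : ∀ v, v ⬝ᵥ (A *ᵥ v) ≤ 0) (g : ι → ℝ) :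
    (∀ v, 2 * (v ⬝ᵥ g) + v ⬝ᵥ (A *ᵥ v) ≤ 0) ↔ g = 0 := by
  refine ⟨fun h ↦ ?_, fun hg v ↦ by simpa [hg] using hA v⟩
  by_contra hg
  have hG : 0 < g ⬝ᵥ g :=
    lt_of_le_of_ne (by simpa using dotProduct_star_self_nonneg g)
      (Ne.symm (dotProduct_self_eq_zero.not.mpr hg))
  set a := -(g ⬝ᵥ (A *ᵥ g))
  have ha : 0 ≤ a := neg_nonneg.mpr (hA g)
  -- on the ray through `g` the left side is `t * (2 * |g|² - t * a)`, positive at this `t`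
  set t := g ⬝ᵥ g / (a + 1)
  have ht : t * (a + 1) = g ⬝ᵥ g := div_mul_cancel₀ _ (by positivity)
  have hray := h (t • g)
  simp only [smul_dotProduct, mulVec_smul, dotProduct_smul, smul_eq_mul] at hray
  nlinarith [div_pos hG (by positivity : (0 : ℝ) < a + 1)]

lemma forall_sub_le_iff_mulVec_eq {T₀ T₁ : Matrix ι ι ℝ} (hT₀ : T₀.IsSymm) (hT₁ : T₁.IsSymm)
    (hT : ∀ v, v ⬝ᵥ (T₀ *ᵥ v) ≤ v ⬝ᵥ (T₁ *ᵥ v)) (m₀ m₁ w : ι → ℝ) :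
    (∀ x, (x - m₀) ⬝ᵥ (T₀ *ᵥ (x - m₀)) - (x - m₁) ⬝ᵥ (T₁ *ᵥ (x - m₁)) ≤
        (w - m₀) ⬝ᵥ (T₀ *ᵥ (w - m₀)) - (w - m₁) ⬝ᵥ (T₁ *ᵥ (w - m₁))) ↔
      T₁ *ᵥ (w - m₁) = T₀ *ᵥ (w - m₀) := by
  have hA : ∀ v, v ⬝ᵥ ((T₀ - T₁) *ᵥ v) ≤ 0 := fun v ↦ by
    simpa [sub_mulVec, dotProduct_sub] using hT v
  rw [eq_comm, ← sub_eq_zero,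
    ← forall_two_mul_dotProduct_add_le_zero_iff hA, (Equiv.addLeft w).symm.forall_congr_left]
  refine forall_congr' fun v ↦ ?_
  rw [Equiv.symm_symm, Equiv.coe_addLeft, hT₀.dotProduct_mulVec_sub_add,
    hT₁.dotProduct_mulVec_sub_add, sub_mulVec, dotProduct_sub, dotProduct_sub]
  constructor <;> intro h <;> linarith

variable [DecidableEq ι]

/-- `u ⬝ᵥ S⁻¹ u = sup_a (2 a ⬝ᵥ u - a ⬝ᵥ S a)`, the supremum being attained at `a = S⁻¹ u`. -/
lemma PosDef.two_mul_dotProduct_sub_le {S : Matrix ι ι ℝ} (hS : S.PosDef) (u a : ι → ℝ) :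
    2 * (a ⬝ᵥ u) - a ⬝ᵥ (S *ᵥ a) ≤ u ⬝ᵥ (S⁻¹ *ᵥ u) := by
  have hSS : S *ᵥ (S⁻¹ *ᵥ u) = u := by
    rw [mulVec_mulVec, mul_nonsing_inv _ ((isUnit_iff_isUnit_det S).mp hS.isUnit), one_mulVec]
  have h := hS.posSemidef.dotProduct_mulVec_nonneg (a + -(S⁻¹ *ᵥ u))
  rw [star_trivial, (isHermitian_iff_isSymm.mp hS.isHermitian).add_dotProduct_mulVec_add,
    mulVec_neg, hSS] at h
  simp only [dotProduct_neg, neg_dotProduct, neg_neg, dotProduct_comm (S⁻¹ *ᵥ u)] at h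
  linarith

lemma PosDef.dotProduct_inv_mulVec_le_of_posSemidef_sub {S₀ S₁ : Matrix ι ι ℝ}
    (hS₁ : S₁.PosDef) (h : (S₀ - S₁).PosSemidef) (u : ι → ℝ) :
    u ⬝ᵥ (S₀⁻¹ *ᵥ u) ≤ u ⬝ᵥ (S₁⁻¹ *ᵥ u) := by
  have hS₀ : S₀.PosDef := by simpa using hS₁.add_posSemidef h
  set a := S₀⁻¹ *ᵥ u
  have hS₀a : S₀ *ᵥ a = u := by
    rw [mulVec_mulVec, mul_nonsing_inv _ ((isUnit_iff_isUnit_det S₀).mp hS₀.isUnit), one_mulVec]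
  have hle : a ⬝ᵥ (S₁ *ᵥ a) ≤ a ⬝ᵥ (S₀ *ᵥ a) := by
    simpa [sub_mulVec, dotProduct_sub] using h.dotProduct_mulVec_nonneg a
  calc u ⬝ᵥ a = 2 * (a ⬝ᵥ u) - a ⬝ᵥ (S₀ *ᵥ a) := by rw [hS₀a, dotProduct_comm]; ring
    _ ≤ 2 * (a ⬝ᵥ u) - a ⬝ᵥ (S₁ *ᵥ a) := by linarith
    _ ≤ u ⬝ᵥ (S₁⁻¹ *ᵥ u) := hS₁.two_mul_dotProduct_sub_le u a

end Matrix

lemma gaussianPDF_div_gaussianPDF {n : ℕ} (m₀ m₁ : Fin n → ℝ)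
    (S₀ S₁ : Matrix (Fin n) (Fin n) ℝ) (x : Fin n → ℝ) :
    gaussianPDF m₀ S₀ x / gaussianPDF m₁ S₁ x =
      S₀.det ^ (-(1 : ℝ) / 2) / S₁.det ^ (-(1 : ℝ) / 2) *
        Real.exp (-(1 / 2) * ((x - m₀) ⬝ᵥ (S₀⁻¹ *ᵥ (x - m₀)) -
          (x - m₁) ⬝ᵥ (S₁⁻¹ *ᵥ (x - m₁)))) := by
  have hπ : (2 * Real.pi) ^ (-(n : ℝ) / 2) ≠ 0 := (Real.rpow_pos_of_pos (by positivity) _).ne'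
  rw [gaussianPDF, gaussianPDF, mul_sub, Real.exp_sub]
  field_simp

lemma gaussianPDF_div_le_gaussianPDF_div_iff {n : ℕ} {m₀ m₁ : Fin n → ℝ}
    {S₀ S₁ : Matrix (Fin n) (Fin n) ℝ} (hS₀ : S₀.PosDef) (hS₁ : S₁.PosDef) (w x : Fin n → ℝ) :
    gaussianPDF m₀ S₀ w / gaussianPDF m₁ S₁ w ≤ gaussianPDF m₀ S₀ x / gaussianPDF m₁ S₁ x ↔
      (x - m₀) ⬝ᵥ (S₀⁻¹ *ᵥ (x - m₀)) - (x - m₁) ⬝ᵥ (S₁⁻¹ *ᵥ (x - m₁)) ≤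
        (w - m₀) ⬝ᵥ (S₀⁻¹ *ᵥ (w - m₀)) - (w - m₁) ⬝ᵥ (S₁⁻¹ *ᵥ (w - m₁)) := by
  have hC : 0 < S₀.det ^ (-(1 : ℝ) / 2) / S₁.det ^ (-(1 : ℝ) / 2) :=
    div_pos (Real.rpow_pos_of_pos hS₀.det_pos _) (Real.rpow_pos_of_pos hS₁.det_pos _)
  rw [gaussianPDF_div_gaussianPDF, gaussianPDF_div_gaussianPDF, mul_le_mul_iff_right₀ hC,
    Real.exp_le_exp]
  constructor <;> intro h <;> linarith

/-- If `S₀ - S₁` is positive semidefinite, then `w` is a global minimizer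
of `x ↦ f_{m₀,S₀}(x) / f_{m₁,S₁}(x)` iff `S₁⁻¹ (w - m₁) = S₀⁻¹ (w - m₀)`. -/
theorem ratio_isGlobalMin_iff {n : ℕ} (m₀ m₁ : Fin n → ℝ)
    (S₀ S₁ : Matrix (Fin n) (Fin n) ℝ) (hS₀ : S₀.PosDef) (hS₁ : S₁.PosDef)
    (hdiff : (S₀ - S₁).PosSemidef) (w : Fin n → ℝ) :
    (∀ x : Fin n → ℝ,
        gaussianPDF m₀ S₀ w / gaussianPDF m₁ S₁ w ≤
          gaussianPDF m₀ S₀ x / gaussianPDF m₁ S₁ x) ↔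
      S₁⁻¹ *ᵥ (w - m₁) = S₀⁻¹ *ᵥ (w - m₀) := by
  simp only [gaussianPDF_div_le_gaussianPDF_div_iff hS₀ hS₁ w]
  exact forall_sub_le_iff_mulVec_eq (isHermitian_iff_isSymm.mp hS₀.inv.isHermitian)
    (isHermitian_iff_isSymm.mp hS₁.inv.isHermitian)
    (hS₁.dotProduct_inv_mulVec_le_of_posSemidef_sub hdiff) m₀ m₁ w
end

section
/- Let m₀, m₁ ∈ ℝⁿ, let σᵢ > 0 and 0 < hᵢ ≤ 1 for i = 1,…,n with hⱼ < 1 for some j, and suppose that m₀ᵢ = m₁ᵢ whenever hᵢ = 1. Set Σ₀ = diag(σ₁²,…,σₙ²) and Σ₁ = diag(h₁σ₁²,…,hₙσₙ²). Then the ratio x ↦ f_{m₀,Σ₀}(x)/f_{m₁,Σ₁}(x) attains its global minimum c_opt over ℝⁿ, c_opt < 1, and a vector w ∈ ℝⁿ satisfies f_{m₀,Σ₀}(w) = c_opt · f_{m₁,Σ₁}(w) (equivalently, w is a root of the Diff-Gaussian function f_{c_opt}) if and only if wᵢ = (m₁ᵢ - hᵢ m₀ᵢ)/(1 - hᵢ)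 for every i with hᵢ < 1. -/
open Matrix MeasureTheory

/-!
For diagonal covariances the density ratio factors over coordinates: it equals
`√(∏ hᵢ) * exp (-½ ∑ gᵢ(xᵢ))` with `gᵢ(t) = (t - m₀ᵢ)² / σᵢ² - (t - m₁ᵢ)² / (hᵢσᵢ²)`.
When `hᵢ < 1`, completing the square writes `gᵢ` as a downward parabola with vertex
`(m₁ᵢ - hᵢm₀ᵢ) / (1 - hᵢ)` and maximum `(m₁ᵢ - m₀ᵢ)² / (σᵢ²(1 - hᵢ)) ≥ 0`; when `hᵢ = 1`
the means agree and `gᵢ ≡ 0`. Hence the ratio is minimal exactly when every coordinate with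
`hᵢ < 1` sits at its vertex, and the minimum is at most `√(∏ hᵢ) < 1`.
-/

open Real Finset

theorem gaussianPDF_diagonal {n : ℕ} (m d : Fin n → ℝ) (hd : ∀ i, d i ≠ 0) (x : Fin n → ℝ) :
    gaussianPDF m (diagonal d) x =
      (2 * π) ^ (-(n : ℝ) / 2) * (∏ i, d i) ^ (-(1 : ℝ) / 2) *
        exp (-(1 / 2) * ∑ i, (x i - m i) ^ 2 / d i) := by
  have hinv : (diagonal d)⁻¹ = diagonal fun i => (d i)⁻¹ := by
    refine inv_eq_right_inv ?_
    rw [diagonal_mul_diagonal, ← diagonal_one]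
    exact congrArg diagonal (funext fun i => mul_inv_cancel₀ (hd i))
  rw [gaussianPDF, hinv, det_diagonal]
  simp only [mulVec_diagonal, dotProduct, Pi.sub_apply, div_eq_mul_inv, sq]
  ring_nf

theorem gaussianPDF_diagonal_div {n : ℕ} (m₀ m₁ d₀ d₁ : Fin n → ℝ) (hd₀ : ∀ i, 0 < d₀ i)
    (hd₁ : ∀ i, 0 < d₁ i) (x : Fin n → ℝ) :
    gaussianPDF m₀ (diagonal d₀) x / gaussianPDF m₁ (diagonal d₁) x =
      √(∏ i, d₁ i / d₀ i) *
        exp (-(1 / 2) * ∑ i, ((x i - m₀ i) ^ 2 / d₀ i - (x i - m₁ i) ^ 2 / d₁ i)) := by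
  rw [gaussianPDF_diagonal m₀ d₀ (fun i => (hd₀ i).ne') x,
    gaussianPDF_diagonal m₁ d₁ (fun i => (hd₁ i).ne') x, prod_div_distrib,
    sqrt_div' _ (prod_nonneg fun i _ => (hd₀ i).le), sum_sub_distrib, mul_sub, exp_sub,
    show -(1 : ℝ) / 2 = -(1 / 2) by ring, rpow_neg (prod_nonneg fun i _ => (hd₀ i).le),
    rpow_neg (prod_nonneg fun i _ => (hd₁ i).le), ← sqrt_eq_rpow, ← sqrt_eq_rpow]
  have : 0 < √(∏ i, d₀ i) := sqrt_pos.2 (prod_pos fun i _ => hd₀ i)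
  have : 0 < √(∏ i, d₁ i) := sqrt_pos.2 (prod_pos fun i _ => hd₁ i)
  have : 0 < (2 * π) ^ (-(n : ℝ) / 2) := by positivity
  field_simp

theorem gaussianPDF_diagonal_pos {n : ℕ} (m d : Fin n → ℝ) (hd : ∀ i, 0 < d i)
    (x : Fin n → ℝ) : 0 < gaussianPDF m (diagonal d) x := by
  rw [gaussianPDF_diagonal m d (fun i => (hd i).ne') x]
  have : 0 < ∏ i, d i := prod_pos fun i _ => hd i
  positivity

theorem prod_lt_one_of_le_one_of_exists_lt {ι R : Type*} [Fintype ι] [CommSemiring R]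
    [PartialOrder R] [IsStrictOrderedRing R] {f : ι → R} (h₀ : ∀ i, 0 < f i) (h₁ : ∀ i, f i ≤ 1)
    (hlt : ∃ i, f i < 1) : ∏ i, f i < 1 := by
  obtain ⟨j, hj⟩ := hlt
  simpa using prod_lt_prod (fun i _ => h₀ i) (fun i _ => h₁ i) ⟨j, mem_univ j, hj⟩

section Coordinate

variable {a b s h : ℝ}

theorem sq_div_sub_sq_div_eq (hs : s ≠ 0) (h₀ : h ≠ 0) (h₁ : h ≠ 1) (t : ℝ) :
    (t - a) ^ 2 / s - (t - b) ^ 2 / (h * s) =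
      (b - a) ^ 2 / (s * (1 - h)) - (1 - h) / (h * s) * (t - (b - h * a) / (1 - h)) ^ 2 := by
  have : 1 - h ≠ 0 := sub_ne_zero.2 h₁.symm
  field_simp
  ring

variable (hs : 0 < s) (h₀ : 0 < h) (h₁ : h ≤ 1) (hab : h = 1 → a = b)
include hs h₀ h₁ hab

-- At `h = 1` the right-hand side is the junk value `(b - a) ^ 2 / 0 = 0`, harmless since `a = b`.
theorem sq_div_sub_sq_div_le (t : ℝ) :
    (t - a) ^ 2 / s - (t - b) ^ 2 / (h * s) ≤ (b - a) ^ 2 / (s * (1 - h)) := by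
  rcases h₁.eq_or_lt with rfl | hlt
  · simp [hab rfl]
  · rw [sq_div_sub_sq_div_eq hs.ne' h₀.ne' hlt.ne]
    exact sub_le_self _ (mul_nonneg (div_nonneg (sub_nonneg.2 h₁) (by positivity)) (sq_nonneg _))

theorem sq_div_sub_sq_div_eq_iff (t : ℝ) :
    (t - a) ^ 2 / s - (t - b) ^ 2 / (h * s) = (b - a) ^ 2 / (s * (1 - h)) ↔
      (h < 1 → t = (b - h * a) / (1 - h)) := by
  rcases h₁.eq_or_lt with rfl | hlt
  · simp [hab rfl]
  · have : (1 - h) / (h * s) ≠ 0 := div_ne_zero (sub_pos.2 hlt).ne' (by positivity)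
    rw [sq_div_sub_sq_div_eq hs.ne' h₀.ne' hlt.ne, sub_eq_self, mul_eq_zero_iff_left this,
      sq_eq_zero_iff, sub_eq_zero]
    exact ⟨fun ht _ => ht, fun ht => ht hlt⟩

end Coordinate

/-- For diagonal covariances `Σ₀ = diag(σᵢ²)`, `Σ₁ = diag(hᵢσᵢ²)` with
`0 < hᵢ ≤ 1`, `hⱼ < 1` for some `j`, and `m₀ᵢ = m₁ᵢ` whenever `hᵢ = 1`, the ratio
`f_{m₀,Σ₀}/f_{m₁,Σ₁}` attains a global minimum `c_opt < 1`, and `w` is a root of the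
Diff-Gaussian `f_{c_opt}` iff `wᵢ = (m₁ᵢ - hᵢ m₀ᵢ)/(1-hᵢ)` for every `i` with `hᵢ < 1`. -/
theorem diffGaussian_root_characterization {n : ℕ} (m₀ m₁ : Fin n → ℝ)
    (σ h : Fin n → ℝ) (hσ : ∀ i, 0 < σ i) (hh0 : ∀ i, 0 < h i) (hh1 : ∀ i, h i ≤ 1)
    (hex : ∃ j : Fin n, h j < 1) (hmean : ∀ i, h i = 1 → m₀ i = m₁ i) :
    ∃ copt : ℝ,
      (∃ x₀ : Fin n → ℝ,
          gaussianPDF m₀ (Matrix.diagonal (fun i => σ i ^ 2)) x₀ /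
              gaussianPDF m₁ (Matrix.diagonal (fun i => h i * σ i ^ 2)) x₀ = copt ∧
          ∀ x : Fin n → ℝ,
            copt ≤ gaussianPDF m₀ (Matrix.diagonal (fun i => σ i ^ 2)) x /
                gaussianPDF m₁ (Matrix.diagonal (fun i => h i * σ i ^ 2)) x) ∧
      copt < 1 ∧
      ∀ w : Fin n → ℝ,
        gaussianPDF m₀ (Matrix.diagonal (fun i => σ i ^ 2)) w =
            copt * gaussianPDF m₁ (Matrix.diagonal (fun i => h i * σ i ^ 2)) w ↔
          ∀ i : Fin n, h i < 1 → w i = (m₁ i - h i * m₀ i) / (1 - h i) := by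
  have hσ2 i : 0 < σ i ^ 2 := pow_pos (hσ i) 2
  set g : Fin n → ℝ → ℝ := fun i t => (t - m₀ i) ^ 2 / σ i ^ 2 - (t - m₁ i) ^ 2 / (h i * σ i ^ 2)
  set G : Fin n → ℝ := fun i => (m₁ i - m₀ i) ^ 2 / (σ i ^ 2 * (1 - h i))
  have hg_le i t : g i t ≤ G i := sq_div_sub_sq_div_le (hσ2 i) (hh0 i) (hh1 i) (hmean i) t
  have hg_eq i t : g i t = G i ↔ (h i < 1 → t = (m₁ i - h i * m₀ i) / (1 - h i)) :=
    sq_div_sub_sq_div_eq_iff (hσ2 i) (hh0 i) (hh1 i) (hmean i) t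
  have hratio x : gaussianPDF m₀ (diagonal fun i => σ i ^ 2) x /
      gaussianPDF m₁ (diagonal fun i => h i * σ i ^ 2) x =
        √(∏ i, h i) * exp (-(1 / 2) * ∑ i, g i (x i)) := by
    rw [gaussianPDF_diagonal_div _ _ _ _ hσ2 (fun i => mul_pos (hh0 i) (hσ2 i)),
      prod_congr rfl fun i _ => mul_div_cancel_right₀ (h i) (hσ2 i).ne']
  have hC : 0 < √(∏ i, h i) := sqrt_pos.2 (prod_pos fun i _ => hh0 i)
  refine ⟨√(∏ i, h i) * exp (-(1 / 2) * ∑ i, G i),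
    ⟨fun i => if h i < 1 then (m₁ i - h i * m₀ i) / (1 - h i) else m₀ i, ?_, fun x => ?_⟩,
    ?_, fun w => ?_⟩
  · rw [hratio, sum_congr rfl fun i _ => (hg_eq i _).2 fun hi => if_pos hi]
  · rw [hratio]
    refine mul_le_mul_of_nonneg_left (exp_le_exp.2 ?_) hC.le
    exact mul_le_mul_of_nonpos_left (sum_le_sum fun i _ => hg_le i (x i)) (by norm_num)
  · have hprod : ∏ i, h i < 1 := prod_lt_one_of_le_one_of_exists_lt hh0 hh1 hex
    have hG : 0 ≤ ∑ i, G i := sum_nonneg fun i _ =>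
      div_nonneg (sq_nonneg _) (mul_nonneg (hσ2 i).le (sub_nonneg.2 (hh1 i)))
    exact mul_lt_one_of_nonneg_of_lt_one_left hC.le ((sqrt_lt' one_pos).2 (by rwa [one_pow]))
      (exp_le_one_iff.2 (mul_nonpos_of_nonpos_of_nonneg (by norm_num) hG))
  · rw [← div_eq_iff (gaussianPDF_diagonal_pos _ _ (fun i => mul_pos (hh0 i) (hσ2 i)) w).ne',
      hratio, mul_right_inj' hC.ne', exp_eq_exp, mul_right_inj' (by norm_num),
      sum_eq_sum_iff_of_le fun i _ => hg_le i (w i)]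
    simp only [mem_univ, true_implies, hg_eq]
end
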